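/- There exists a ℂ-linear map D : Z → Der_ℂ(Ū), from the center Z = Z(Ū) to the ℂ-linear derivations of Ū, such that for every z ∈ Z the derivation D(z) restricted to Z equals the Hamiltonian derivation {z, −}. (Together with the hypothesis that Ū is a finitely generated Z-module, this makes the pair (Ū, Z) a Poisson order in the sense of Brown–Gordon: Z is a central subalgebra carrying a Poisson bracket, and the Hamiltonian vector fields of Z extend to derivations of Ū.) -/

import Mathlib

/-!
For `u ∈ U` whose image is central in `Ū = U/hU`, every commutator `[u, v]` lies in `hU`, and
since `h` is central and regular the quotient `[u, v]/h` is unique; its image `D_u v̄` in `Ū` is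
well defined and is a derivation because `ad u` is. The derivation depends on the lift `u` of `ū`,
not only on `ū`, so `D` is made linear in `z ∈ Z(Ū)` by lifting through a linear section of the
quotient map, which exists because `Ū` is a projective (here: free) module over the ground ring.
-/

section Hamiltonian

variable {R U V : Type*} [CommRing R] [Ring U] [Algebra R U] [Ring V] [Algebra R V]
  (π : U →ₐ[R] V) (H : U)

/-- The image of `[u, v] / H`; the division is meaningful when `H` divides `[u, v]`. -/
noncomputable def hamiltonian (u v : U) : V :=
  π (Classical.epsilon fun w => u * v - v * u = H * w)

variable {π H}

theorem hamiltonian_eq (hreg : IsLeftRegular H) {u v w : U} (hw : u * v - v * u = H * w) :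
    hamiltonian π H u v = π w := by
  have hspec := Classical.epsilon_spec (p := fun w => u * v - v * u = H * w) ⟨w, hw⟩
  exact congrArg π (hreg (hspec.symm.trans hw))

theorem exists_commutator_eq_mul (hker : ∀ x, π x = 0 → ∃ y, x = H * y) {u : U}
    (hu : ∀ t, Commute (π u) t) (v : U) : ∃ w, u * v - v * u = H * w :=
  hker _ (by rw [map_sub, map_mul, map_mul, (hu (π v)).eq, sub_self])

section

variable (hH : ∀ x, Commute H x) (hreg : IsLeftRegular H) (hker : ∀ x, π x = 0 → ∃ y, x = H * y)
include hreg hker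

theorem hamiltonian_add_left {u u' : U} (hu : ∀ t, Commute (π u) t)
    (hu' : ∀ t, Commute (π u') t) (v : U) :
    hamiltonian π H (u + u') v = hamiltonian π H u v + hamiltonian π H u' v := by
  obtain ⟨w, hw⟩ := exists_commutator_eq_mul hker hu v
  obtain ⟨w', hw'⟩ := exists_commutator_eq_mul hker hu' v
  have hsum : (u + u') * v - v * (u + u') = H * (w + w') := by
    rw [mul_add H, ← hw, ← hw']; noncomm_ring
  rw [hamiltonian_eq hreg hw, hamiltonian_eq hreg hw', hamiltonian_eq hreg hsum, map_add]

theorem hamiltonian_smul_left (c : R) {u : U} (hu : ∀ t, Commute (π u) t) (v : U) :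
    hamiltonian π H (c • u) v = c • hamiltonian π H u v := by
  obtain ⟨w, hw⟩ := exists_commutator_eq_mul hker hu v
  have hsmul : (c • u) * v - v * (c • u) = H * (c • w) := by
    rw [smul_mul_assoc, mul_smul_comm, ← smul_sub, hw, mul_smul_comm]
  rw [hamiltonian_eq hreg hw, hamiltonian_eq hreg hsmul, map_smul]

variable {u : U} (hu : ∀ t, Commute (π u) t)
include hu

theorem hamiltonian_add_right (v v' : U) :
    hamiltonian π H u (v + v') = hamiltonian π H u v + hamiltonian π H u v' := by
  obtain ⟨w, hw⟩ := exists_commutator_eq_mul hker hu v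
  obtain ⟨w', hw'⟩ := exists_commutator_eq_mul hker hu v'
  have hsum : u * (v + v') - (v + v') * u = H * (w + w') := by
    rw [mul_add H, ← hw, ← hw']; noncomm_ring
  rw [hamiltonian_eq hreg hw, hamiltonian_eq hreg hw', hamiltonian_eq hreg hsum, map_add]

theorem hamiltonian_smul_right (c : R) (v : U) :
    hamiltonian π H u (c • v) = c • hamiltonian π H u v := by
  obtain ⟨w, hw⟩ := exists_commutator_eq_mul hker hu v
  have hsmul : u * (c • v) - (c • v) * u = H * (c • w) := by
    rw [mul_smul_comm, smul_mul_assoc, ← smul_sub, hw, mul_smul_comm]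
  rw [hamiltonian_eq hreg hw, hamiltonian_eq hreg hsmul, map_smul]

include hH

theorem hamiltonian_mul_right (v v' : U) :
    hamiltonian π H u (v * v') = hamiltonian π H u v * π v' + π v * hamiltonian π H u v' := by
  obtain ⟨w, hw⟩ := exists_commutator_eq_mul hker hu v
  obtain ⟨w', hw'⟩ := exists_commutator_eq_mul hker hu v'
  have hleibniz : u * (v * v') - v * v' * u = H * (w * v' + v * w') :=
    calc u * (v * v') - v * v' * u = (u * v - v * u) * v' + v * (u * v' - v' * u) := by
          noncomm_ring
      _ = H * w * v' + v * H * w' := by rw [hw, hw', mul_assoc v]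
      _ = H * (w * v' + v * w') := by rw [← (hH v).eq]; noncomm_ring
  rw [hamiltonian_eq hreg hw, hamiltonian_eq hreg hw', hamiltonian_eq hreg hleibniz, map_add,
    map_mul, map_mul]

theorem hamiltonian_congr_right {v v' : U} (hvv' : π v = π v') :
    hamiltonian π H u v = hamiltonian π H u v' := by
  obtain ⟨y, hy⟩ := hker (v - v') (by rw [map_sub, hvv', sub_self])
  have hkernel : u * (H * y) - H * y * u = H * (u * y - y * u) := by
    rw [← mul_assoc, ← (hH u).eq, mul_assoc, mul_assoc, ← mul_sub]
  have hzero : hamiltonian π H u (H * y) = 0 := by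
    rw [hamiltonian_eq hreg hkernel, map_sub, map_mul, map_mul, (hu (π y)).eq, sub_self]
  rw [← sub_add_cancel v v', hy, hamiltonian_add_right hreg hker hu, hzero, zero_add]

end

theorem exists_linearMap_center_hamiltonian [Module.Projective R V] (hπ : Function.Surjective π)
    (hH : ∀ x, Commute H x) (hreg : IsLeftRegular H) (hker : ∀ x, π x = 0 → ∃ y, x = H * y) :
    ∃ D : Subalgebra.center R V →ₗ[R] V →ₗ[R] V,
      (∀ z x y, D z (x * y) = D z x * y + x * D z y) ∧
      ∀ (z : Subalgebra.center R V) x, ∃ u v, π u = z ∧ π v = x ∧ D z x = hamiltonian π H u v := by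
  obtain ⟨σ, hσ⟩ := π.toLinearMap.exists_rightInverse_of_surjective (LinearMap.range_eq_top.2 hπ)
  have hπσ (x : V) : π (σ x) = x := LinearMap.congr_fun hσ x
  have hcentral (z : Subalgebra.center R V) (t : V) : Commute (π (σ z)) t := by
    rw [hπσ]; exact (Subalgebra.mem_center_iff.1 z.2 t).symm
  refine ⟨LinearMap.mk₂ R (fun z x => hamiltonian π H (σ z) (σ x)) (fun z z' x => ?_)
    (fun c z x => ?_) (fun z x x' => ?_) (fun c z x => ?_), fun z x y => ?_,
    fun z x => ⟨σ z, σ x, hπσ z, hπσ x, rfl⟩⟩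
  · simp only [Subalgebra.coe_add, map_add]
    exact hamiltonian_add_left hreg hker (hcentral z) (hcentral z') _
  · simp only [Subalgebra.coe_smul, map_smul]
    exact hamiltonian_smul_left hreg hker c (hcentral z) _
  · simp only [map_add]
    exact hamiltonian_add_right hreg hker (hcentral z) _ _
  · simp only [map_smul]
    exact hamiltonian_smul_right hreg hker (hcentral z) c _
  · have hlift : π (σ (x * y)) = π (σ x * σ y) := by rw [map_mul π, hπσ, hπσ, hπσ]
    simp only [LinearMap.mk₂_apply]
    rw [hamiltonian_congr_right hH hreg hker (hcentral z) hlift,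
      hamiltonian_mul_right hH hreg hker (hcentral z), hπσ, hπσ]

end Hamiltonian

theorem stmt7_general
    (A : Type*) [CommRing A] (h : A)
    (U : Type*) [Ring U] [Algebra ℂ U] [Algebra A U]
    (hreg : ∀ x : U, algebraMap A U h * x = 0 → x = 0)
    (Ubar : Type*) [Ring Ubar] [Algebra ℂ Ubar]
    (π : U →ₐ[ℂ] Ubar) (hπ : Function.Surjective π)
    (hker : ∀ x : U, π x = 0 ↔ ∃ y : U, x = algebraMap A U h * y)
    (B : Ubar → Ubar → Ubar)
    (hB : ∀ u v w : U, (∀ t : Ubar, π u * t = t * π u) → (∀ t : Ubar, π v * t = t * π v) →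
        u * v - v * u = algebraMap A U h * w → B (π u) (π v) = π w) :
    ∃ D : Subalgebra.center ℂ Ubar →ₗ[ℂ] (Ubar →ₗ[ℂ] Ubar),
      (∀ z : Subalgebra.center ℂ Ubar, ∀ x y : Ubar,
          D z (x * y) = D z x * y + x * D z y) ∧
      (∀ z x : Subalgebra.center ℂ Ubar, D z (x : Ubar) = B (z : Ubar) (x : Ubar)) := by
  have hHreg : IsLeftRegular (algebraMap A U h) := isLeftRegular_iff_right_eq_zero_of_mul.2 hreg
  have hker' (x : U) := (hker x).1
  obtain ⟨D, hleibniz, hlift⟩ := exists_linearMap_center_hamiltonian hπ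
    (Algebra.commute_algebraMap_left h) hHreg hker'
  refine ⟨D, hleibniz, fun z x => ?_⟩
  obtain ⟨u, v, hu, hv, hD⟩ := hlift z x
  have hcentral (y : Subalgebra.center ℂ Ubar) (t : Ubar) : (y : Ubar) * t = t * y :=
    (Subalgebra.mem_center_iff.1 y.2 t).symm
  have hucentral (t : Ubar) : π u * t = t * π u := hu ▸ hcentral z t
  have hvcentral (t : Ubar) : π v * t = t * π v := hv ▸ hcentral x t
  obtain ⟨w, hw⟩ := exists_commutator_eq_mul hker' hucentral v
  rw [hD, hamiltonian_eq hHreg hw, ← hu, ← hv, hB u v w hucentral hvcentral hw]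

/-- there is a ℂ-linear map `D : Z → Der_ℂ(Ū)` from the center of `Ū` to the
derivations of `Ū` such that `D z` restricted to `Z` is the Hamiltonian derivation `{z, −}`
(the Poisson-order property of Brown–Gordon). -/
theorem stmt7
    (A : Type*) [CommRing A] [Algebra ℂ A] (h : A)
    (hA : Function.Bijective (algebraMap ℂ (A ⧸ Ideal.span {h})))
    (U : Type*) [Ring U] [Algebra ℂ U] [Algebra A U] [IsScalarTower ℂ A U]
    (hreg : ∀ x : U, algebraMap A U h * x = 0 → x = 0)
    (Ubar : Type*) [Ring Ubar] [Algebra ℂ Ubar]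
    (π : U →ₐ[ℂ] Ubar) (hπ : Function.Surjective π)
    (hker : ∀ x : U, π x = 0 ↔ ∃ y : U, x = algebraMap A U h * y)
    (B : Ubar → Ubar → Ubar)
    (hB : ∀ u v w : U, (∀ t : Ubar, π u * t = t * π u) → (∀ t : Ubar, π v * t = t * π v) →
        u * v - v * u = algebraMap A U h * w → B (π u) (π v) = π w) :
    ∃ D : Subalgebra.center ℂ Ubar →ₗ[ℂ] (Ubar →ₗ[ℂ] Ubar),
      (∀ z : Subalgebra.center ℂ Ubar, ∀ x y : Ubar,
          D z (x * y) = D z x * y + x * D z y) ∧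
      (∀ z x : Subalgebra.center ℂ Ubar, D z (x : Ubar) = B (z : Ubar) (x : Ubar)) :=
  stmt7_general A h U hreg Ubar π hπ hker B hB
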